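/- Let A be an MV-algebra and G_A the Grothendieck group of the cancellative lattice-ordered monoid M_A of good sequences of A. Then the element u := [(1),(0)], where (1) is the good sequence (¬0, 0, 0, …), is a strong unit of G_A: u ≥ 0, and for every x ∈ G_A there exists n ∈ ℕ with x ≤ n·u. -/

import Mathlib

class MVAlgebra (A : Type*) extends Zero A where
  oplus : A → A → A
  mvneg : A → A
  oplus_assoc : ∀ x y z : A, oplus x (oplus y z) = oplus (oplus x y) z
  oplus_comm : ∀ x y : A, oplus x y = oplus y x
  oplus_zero : ∀ x : A, oplus x 0 = x
  mvneg_mvneg : ∀ x : A, mvneg (mvneg x) = x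
  oplus_mvneg_zero : ∀ x : A, oplus x (mvneg 0) = mvneg 0
  lukasiewicz : ∀ x y : A,
    oplus (mvneg (oplus (mvneg x) y)) y = oplus (mvneg (oplus (mvneg y) x)) x

open MVAlgebra

/-- The derived operation `x ⊙ y := ¬(¬x ⊕ ¬y)`. -/
def MVAlgebra.odot {A : Type*} [MVAlgebra A] (x y : A) : A :=
  mvneg (oplus (mvneg x) (mvneg y))

/-- A good sequence: `aᵢ ⊕ aᵢ₊₁ = aᵢ` for all `i`, and eventually zero. -/
def Good {A : Type*} [MVAlgebra A] (a : ℕ → A) : Prop :=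
  (∀ i, oplus (a i) (a (i + 1)) = a i) ∧ ∃ N, ∀ m, N ≤ m → a m = 0

/-- The sum of (good) sequences:
`(a + b)ₙ = aₙ ⊕ (aₙ₋₁ ⊙ b₀) ⊕ … ⊕ (a₀ ⊙ bₙ₋₁) ⊕ bₙ`. -/
def addGood {A : Type*} [MVAlgebra A] (a b : ℕ → A) : ℕ → A := fun n =>
  ((List.range n).map (fun j => odot (a (n - 1 - j)) (b j))).foldr oplus
    (oplus (a n) (b n))

/-- The natural order of an MV-algebra: `x ≤ y` iff `¬x ⊕ y = ¬0`. -/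
def MVLe {A : Type*} [MVAlgebra A] (x y : A) : Prop :=
  oplus (mvneg x) y = mvneg 0

/-- Pointwise order on sequences. -/
def SeqLe {A : Type*} [MVAlgebra A] (a b : ℕ → A) : Prop := ∀ i, MVLe (a i) (b i)

/-- The zero good sequence. -/
def zeroSeq (A : Type*) [MVAlgebra A] : ℕ → A := fun _ => 0

/-- The good sequence `(1) = (¬0, 0, 0, …)`. -/
def oneSeq (A : Type*) [MVAlgebra A] : ℕ → A := fun i =>
  if i = 0 then mvneg 0 else 0

/-- `n`-fold sum of a good sequence. -/
def nGood {A : Type*} [MVAlgebra A] : ℕ → (ℕ → A) → (ℕ → A)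
  | 0, _ => zeroSeq A
  | n + 1, a => addGood a (nGood n a)

/-- The order on the Grothendieck group `G_A` of the monoid `M_A` of good
sequences, expressed on representing pairs: `[a,b] ≤ [c,d]` iff `a + d ≤ c + b`. -/
def PairLe {A : Type*} [MVAlgebra A] (p q : (ℕ → A) × (ℕ → A)) : Prop :=
  SeqLe (addGood p.1 q.2) (addGood q.1 p.2)

/-!
`n·(1)` is the good sequence `(1, …, 1, 0, …)` with `n` leading ones, and `1` absorbs `⊕`, so
`n·(1) + b` equals `1` below index `n`. A good sequence `a` vanishes from some index `N` on, hence
`a + 0 = a ≤ N·(1) + b` pointwise, i.e. `[a,b] ≤ N·u`; and `u ≥ 0` because `0` is the least element.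
-/

namespace MVAlgebra

variable {A : Type*} [MVAlgebra A]

lemma zero_oplus (x : A) : oplus 0 x = x := by rw [oplus_comm, oplus_zero]

lemma mvneg_zero_oplus (x : A) : oplus (mvneg 0) x = mvneg 0 := by
  rw [oplus_comm, oplus_mvneg_zero]

lemma odot_zero (x : A) : odot x 0 = 0 := by
  rw [odot, oplus_mvneg_zero, mvneg_mvneg]

lemma zero_odot (x : A) : odot 0 x = 0 := by
  rw [odot, mvneg_zero_oplus, mvneg_mvneg]

lemma mvneg_zero_odot (x : A) : odot (mvneg 0) x = x := by
  rw [odot, mvneg_mvneg, zero_oplus, mvneg_mvneg]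

lemma foldr_oplus_of_forall_eq_zero (init : A) {l : List A} (h : ∀ x ∈ l, x = 0) :
    l.foldr oplus init = init := by
  induction l with
  | nil => rfl
  | cons x t ih =>
    rw [List.foldr_cons, ih fun y hy => h y (List.mem_cons_of_mem _ hy),
      h x List.mem_cons_self, zero_oplus]

lemma foldr_oplus_mvneg_zero (l : List A) : l.foldr oplus (mvneg 0) = mvneg 0 := by
  induction l with
  | nil => rfl
  | cons x t ih => rw [List.foldr_cons, ih, oplus_mvneg_zero]

end MVAlgebra

section GoodSequences

variable {A : Type*} [MVAlgebra A]

lemma mvLe_zero_left (x : A) : MVLe 0 x := mvneg_zero_oplus x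

lemma mvLe_mvneg_zero (x : A) : MVLe x (mvneg 0) := oplus_mvneg_zero _

lemma addGood_zeroSeq_right (a : ℕ → A) : addGood a (zeroSeq A) = a := by
  funext n
  rw [addGood, foldr_oplus_of_forall_eq_zero]
  · exact oplus_zero _
  · simp only [List.mem_map]
    rintro _ ⟨j, -, rfl⟩
    exact odot_zero _

lemma addGood_eq_mvneg_zero_of_left (c b : ℕ → A) {i : ℕ} (h : c i = mvneg 0) :
    addGood c b i = mvneg 0 := by
  rw [addGood, h, mvneg_zero_oplus, foldr_oplus_mvneg_zero]

lemma addGood_oneSeq_succ (c : ℕ → A) (m : ℕ) :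
    addGood (oneSeq A) c (m + 1) = oplus (c m) (c (m + 1)) := by
  have one_succ : oneSeq A (m + 1) = 0 := if_neg m.succ_ne_zero
  rw [addGood, List.range_succ, List.map_append, List.foldr_append,
    foldr_oplus_of_forall_eq_zero]
  · simp only [List.map_cons, List.map_nil, List.foldr_cons, List.foldr_nil, Nat.sub_self,
      Nat.add_sub_cancel]
    rw [one_succ, zero_oplus]
    exact congrArg (oplus · _) (mvneg_zero_odot _)
  · simp only [List.mem_map, List.mem_range]
    rintro _ ⟨j, hj, rfl⟩
    rw [show oneSeq A (m + 1 - 1 - j) = 0 from if_neg (by omega), zero_odot]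

lemma nGood_oneSeq_of_lt {n i : ℕ} (h : i < n) : nGood n (oneSeq A) i = mvneg 0 := by
  induction n generalizing i with
  | zero => omega
  | succ n ih =>
    cases i with
    | zero => exact addGood_eq_mvneg_zero_of_left _ _ rfl
    | succ m => rw [nGood, addGood_oneSeq_succ, ih (by omega), mvneg_zero_oplus]

lemma seqLe_addGood_nGood_oneSeq {a : ℕ → A} {N : ℕ} (ha : ∀ m, N ≤ m → a m = 0)
    (b : ℕ → A) : SeqLe a (addGood (nGood N (oneSeq A)) b) := by
  intro i
  rcases lt_or_ge i N with hi | hi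
  · rw [addGood_eq_mvneg_zero_of_left _ _ (nGood_oneSeq_of_lt hi)]
    exact mvLe_mvneg_zero _
  · rw [ha i hi]
    exact mvLe_zero_left _

end GoodSequences

/-- The element `u = [(1),(0)]` is a strong unit of the Grothendieck group `G_A`
of the monoid of good sequences of an MV-algebra `A`: `u ≥ 0`, and every element
`[a,b]` of `G_A` satisfies `[a,b] ≤ n·u` for some natural number `n`. -/
theorem unit_is_strong_in_grothendieck_group (A : Type*) [MVAlgebra A] :
    PairLe ((zeroSeq A, zeroSeq A)) ((oneSeq A, zeroSeq A)) ∧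
    ∀ a b : ℕ → A, Good a → Good b →
      ∃ n : ℕ, PairLe ((a, b)) ((nGood n (oneSeq A), zeroSeq A)) := by
  refine ⟨fun i => ?_, fun a b ha _ => ?_⟩
  · rw [addGood_zeroSeq_right, addGood_zeroSeq_right]
    exact mvLe_zero_left _
  · obtain ⟨-, N, ha_zero⟩ := ha
    refine ⟨N, ?_⟩
    rw [PairLe, addGood_zeroSeq_right]
    exact seqLe_addGood_nGood_oneSeq ha_zero b
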